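/- For a decision tree t and binary encoding x, the prediction f_t(x) = p_{GetLeaf(x,t)} equals the optimal value of the linear program: maximize Σ_{ℓ∈leaves(t)} p_ℓ y_ℓ subject to y ≥ 0, Σ_ℓ y_ℓ = 1, and for every split s, Σ_{ℓ∈left(s)} y_ℓ ≤ q(s,x) and Σ_{ℓ∈right(s)} y_ℓ ≤ 1 − q(s,x). -/
import Mathlib


inductive BTree : Type
  | leaf : BTree
  | node : BTree → BTree → BTree

namespace BTree

/-- Leaves of a tree, identified by their root-to-node path (`true` = left). -/
def leavesF : BTree → Finset (List Bool)
  | .leaf => {[]}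
  | .node l r => (leavesF l).image (List.cons true) ∪ (leavesF r).image (List.cons false)

/-- Splits (internal nodes) of a tree, identified by their root-to-node path. -/
def splitsF : BTree → Finset (List Bool)
  | .leaf => ∅
  | .node l r =>
      insert [] ((splitsF l).image (List.cons true) ∪ (splitsF r).image (List.cons false))

/-- Leaves in the left subtree of split `s`. -/
def leftF (t : BTree) (s : List Bool) : Finset (List Bool) :=
  (leavesF t).filter (fun ℓ => (s ++ [true]) <+: ℓ)

/-- Leaves in the right subtree of split `s`. -/
def rightF (t : BTree) (s : List Bool) : Finset (List Bool) :=
  (leavesF t).filter (fun ℓ => (s ++ [false]) <+: ℓ)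

/-- Splits `s` such that leaf `ℓ` is in the left subtree of `s`. -/
def LSF (t : BTree) (ℓ : List Bool) : Finset (List Bool) :=
  (splitsF t).filter (fun s => (s ++ [true]) <+: ℓ)

/-- Splits `s` such that leaf `ℓ` is in the right subtree of `s`. -/
def RSF (t : BTree) (ℓ : List Bool) : Finset (List Bool) :=
  (splitsF t).filter (fun s => (s ++ [false]) <+: ℓ)

def getLeafAux (q : List Bool → Bool) : BTree → List Bool → List Bool
  | .leaf, pth => pth
  | .node l r, pth =>
      if q pth then getLeafAux q l (pth ++ [true]) else getLeafAux q r (pth ++ [false])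

/-- The leaf reached by routing down tree `t`, taking the left branch at a split `s`
iff the query value `q s` is `true`. -/
def getLeaf (t : BTree) (q : List Bool → Bool) : List Bool := getLeafAux q t []

/-- The numeric value of the 0/1 query at split `s`. -/
def qval (q : List Bool → Bool) (s : List Bool) : ℝ := if q s then 1 else 0

end BTree

/-- Feasibility of a leaf-weight vector `y` for the single-tree subproblem determined by
the binary encoding `x` (abstracted into the 0/1 split query values `q`):
(i) the weights over the leaves sum to one; (iii) nonnegativity; and (ii) for every split
`s`, the left constraint `Σ_{ℓ ∈ left(s)} y_ℓ ≤ q(s,x)` and the right constraint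
`Σ_{ℓ ∈ right(s)} y_ℓ ≤ 1 − q(s,x)`. -/
def BTree.Feasible (t : BTree) (q : List Bool → Bool) (y : List Bool → ℝ) : Prop :=
  ((∑ ℓ ∈ t.leavesF, y ℓ) = 1) ∧
  (∀ ℓ ∈ t.leavesF, 0 ≤ y ℓ) ∧
  (∀ s ∈ t.splitsF, (∑ ℓ ∈ t.leftF s, y ℓ) ≤ BTree.qval q s) ∧
  (∀ s ∈ t.splitsF, (∑ ℓ ∈ t.rightF s, y ℓ) ≤ 1 - BTree.qval q s)

namespace BTree

lemma getLeafAux_shift (q : List Bool → Bool) (t : BTree) (pth : List Bool) :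
    getLeafAux q t pth = pth ++ getLeafAux (fun s => q (pth ++ s)) t [] := by
  induction t generalizing q pth with
  | leaf => simp [getLeafAux]
  | node l r ihl ihr =>
    show (if q pth then getLeafAux q l (pth ++ [true]) else getLeafAux q r (pth ++ [false])) = _
    have h0 : getLeafAux (fun s => q (pth ++ s)) (node l r) []
        = if q pth then getLeafAux (fun s => q (pth ++ s)) l [true]
          else getLeafAux (fun s => q (pth ++ s)) r [false] := by
      show (if q (pth ++ []) then _ else _) = _
      simp [getLeafAux]
    rw [h0]
    by_cases h : q pth
    · simp only [h, if_true]
      rw [ihl q (pth ++ [true]), ihl (fun s => q (pth ++ s)) [true]]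
      simp
    · simp only [h, if_false]
      rw [ihr q (pth ++ [false]), ihr (fun s => q (pth ++ s)) [false]]
      simp

lemma getLeaf_node (l r : BTree) (q : List Bool → Bool) :
    getLeaf (node l r) q =
      if q [] then true :: getLeaf l (fun s => q (true :: s))
      else false :: getLeaf r (fun s => q (false :: s)) := by
  cases hq : q [] with
  | true =>
    have h1 : getLeaf (node l r) q = getLeafAux q l [true] := by
      show (if q [] then getLeafAux q l ([] ++ [true]) else _) = _
      simp [hq]
    rw [h1, getLeafAux_shift q l [true]]
    simp [hq, getLeaf]
  | false =>
    have h1 : getLeaf (node l r) q = getLeafAux q r [false] := by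
      show (if q [] then _ else getLeafAux q r ([] ++ [false])) = _
      simp [hq]
    rw [h1, getLeafAux_shift q r [false]]
    simp [hq, getLeaf]

lemma getLeaf_mem (t : BTree) (q : List Bool → Bool) : getLeaf t q ∈ t.leavesF := by
  induction t generalizing q with
  | leaf => simp [getLeaf, getLeafAux, leavesF]
  | node l r ihl ihr =>
    rw [getLeaf_node]
    cases hq : q [] with
    | true =>
      simp [hq]
      exact Finset.mem_union_left _ (Finset.mem_image_of_mem _ (ihl _))
    | false =>
      simp [hq]
      exact Finset.mem_union_right _ (Finset.mem_image_of_mem _ (ihr _))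

lemma cons_inj (b : Bool) : Function.Injective (List.cons b) :=
  fun _ _ h => by injection h

lemma leftF_node_nil (l r : BTree) :
    leftF (node l r) [] = (leavesF l).image (List.cons true) := by
  ext m
  simp only [leftF, leavesF, Finset.mem_filter, Finset.mem_union, Finset.mem_image,
    List.nil_append]
  constructor
  · rintro ⟨⟨a, ha, rfl⟩ | ⟨a, ha, rfl⟩, hpre⟩
    · exact ⟨a, ha, rfl⟩
    · simp [List.cons_prefix_cons] at hpre
  · rintro ⟨a, ha, rfl⟩
    exact ⟨Or.inl ⟨a, ha, rfl⟩, a, rfl⟩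

lemma rightF_node_nil (l r : BTree) :
    rightF (node l r) [] = (leavesF r).image (List.cons false) := by
  ext m
  simp only [rightF, leavesF, Finset.mem_filter, Finset.mem_union, Finset.mem_image,
    List.nil_append]
  constructor
  · rintro ⟨⟨a, ha, rfl⟩ | ⟨a, ha, rfl⟩, hpre⟩
    · simp [List.cons_prefix_cons] at hpre
    · exact ⟨a, ha, rfl⟩
  · rintro ⟨a, ha, rfl⟩
    exact ⟨Or.inr ⟨a, ha, rfl⟩, a, rfl⟩

lemma leftF_node_cons_true (l r : BTree) (s : List Bool) :
    leftF (node l r) (true :: s) = (leftF l s).image (List.cons true) := by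
  ext m
  simp only [leftF, leavesF, Finset.mem_filter, Finset.mem_union, Finset.mem_image,
    List.cons_append]
  constructor
  · rintro ⟨⟨a, ha, rfl⟩ | ⟨a, ha, rfl⟩, hpre⟩
    · rw [List.cons_prefix_cons] at hpre
      exact ⟨a, ⟨ha, hpre.2⟩, rfl⟩
    · simp [List.cons_prefix_cons] at hpre
  · rintro ⟨a, ⟨ha, hpre⟩, rfl⟩
    refine ⟨Or.inl ⟨a, ha, rfl⟩, ?_⟩
    rw [List.cons_prefix_cons]
    exact ⟨rfl, hpre⟩

lemma rightF_node_cons_true (l r : BTree) (s : List Bool) :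
    rightF (node l r) (true :: s) = (rightF l s).image (List.cons true) := by
  ext m
  simp only [rightF, leavesF, Finset.mem_filter, Finset.mem_union, Finset.mem_image,
    List.cons_append]
  constructor
  · rintro ⟨⟨a, ha, rfl⟩ | ⟨a, ha, rfl⟩, hpre⟩
    · rw [List.cons_prefix_cons] at hpre
      exact ⟨a, ⟨ha, hpre.2⟩, rfl⟩
    · simp [List.cons_prefix_cons] at hpre
  · rintro ⟨a, ⟨ha, hpre⟩, rfl⟩
    refine ⟨Or.inl ⟨a, ha, rfl⟩, ?_⟩
    rw [List.cons_prefix_cons]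
    exact ⟨rfl, hpre⟩

lemma leftF_node_cons_false (l r : BTree) (s : List Bool) :
    leftF (node l r) (false :: s) = (leftF r s).image (List.cons false) := by
  ext m
  simp only [leftF, leavesF, Finset.mem_filter, Finset.mem_union, Finset.mem_image,
    List.cons_append]
  constructor
  · rintro ⟨⟨a, ha, rfl⟩ | ⟨a, ha, rfl⟩, hpre⟩
    · simp [List.cons_prefix_cons] at hpre
    · rw [List.cons_prefix_cons] at hpre
      exact ⟨a, ⟨ha, hpre.2⟩, rfl⟩
  · rintro ⟨a, ⟨ha, hpre⟩, rfl⟩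
    refine ⟨Or.inr ⟨a, ha, rfl⟩, ?_⟩
    rw [List.cons_prefix_cons]
    exact ⟨rfl, hpre⟩

lemma rightF_node_cons_false (l r : BTree) (s : List Bool) :
    rightF (node l r) (false :: s) = (rightF r s).image (List.cons false) := by
  ext m
  simp only [rightF, leavesF, Finset.mem_filter, Finset.mem_union, Finset.mem_image,
    List.cons_append]
  constructor
  · rintro ⟨⟨a, ha, rfl⟩ | ⟨a, ha, rfl⟩, hpre⟩
    · simp [List.cons_prefix_cons] at hpre
    · rw [List.cons_prefix_cons] at hpre
      exact ⟨a, ⟨ha, hpre.2⟩, rfl⟩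
  · rintro ⟨a, ⟨ha, hpre⟩, rfl⟩
    refine ⟨Or.inr ⟨a, ha, rfl⟩, ?_⟩
    rw [List.cons_prefix_cons]
    exact ⟨rfl, hpre⟩

lemma q_eq_of_prefix (t : BTree) (q : List Bool → Bool) :
    ∀ s ∈ t.splitsF, ∀ b : Bool, (s ++ [b]) <+: getLeaf t q → q s = b := by
  induction t generalizing q with
  | leaf => simp [splitsF]
  | node l r ihl ihr =>
    intro s hs b hpre
    rw [getLeaf_node] at hpre
    simp only [splitsF, Finset.mem_insert, Finset.mem_union, Finset.mem_image] at hs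
    rcases hs with rfl | ⟨a, ha, rfl⟩ | ⟨a, ha, rfl⟩
    · cases hq : q [] with
      | true =>
        rw [hq, if_pos rfl] at hpre
        rcases hpre with ⟨tl, htl⟩
        simp only [List.nil_append, List.cons_append] at htl
        injection htl with h1 _
        exact h1.symm
      | false =>
        rw [hq, if_neg (by simp)] at hpre
        rcases hpre with ⟨tl, htl⟩
        simp only [List.nil_append, List.cons_append] at htl
        injection htl with h1 _
        exact h1.symm
    · cases hq : q [] with
      | true =>
        rw [hq, if_pos rfl] at hpre
        rw [List.cons_append, List.cons_prefix_cons] at hpre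
        exact ihl _ a ha b hpre.2
      | false =>
        rw [hq, if_neg (by simp)] at hpre
        rw [List.cons_append, List.cons_prefix_cons] at hpre
        exact absurd hpre.1 (by simp)
    · cases hq : q [] with
      | true =>
        rw [hq, if_pos rfl] at hpre
        rw [List.cons_append, List.cons_prefix_cons] at hpre
        exact absurd hpre.1 (by simp)
      | false =>
        rw [hq, if_neg (by simp)] at hpre
        rw [List.cons_append, List.cons_prefix_cons] at hpre
        exact ihr _ a ha b hpre.2

lemma sum_leaves_node (l r : BTree) (g : List Bool → ℝ) :
    (∑ ℓ ∈ (node l r).leavesF, g ℓ)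
      = (∑ ℓ ∈ l.leavesF, g (true :: ℓ)) + (∑ ℓ ∈ r.leavesF, g (false :: ℓ)) := by
  have hdisj : Disjoint ((leavesF l).image (List.cons true))
      ((leavesF r).image (List.cons false)) := by
    rw [Finset.disjoint_left]
    intro m hm1 hm2
    rcases Finset.mem_image.mp hm1 with ⟨a, _, rfl⟩
    rcases Finset.mem_image.mp hm2 with ⟨b, _, hb⟩
    exact absurd (List.head_eq_of_cons_eq hb) (by simp)
  show (∑ ℓ ∈ (leavesF l).image (List.cons true) ∪ (leavesF r).image (List.cons false), g ℓ) = _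
  rw [Finset.sum_union hdisj,
    Finset.sum_image (fun x _ y _ h => cons_inj true h),
    Finset.sum_image (fun x _ y _ h => cons_inj false h)]

lemma mem_leaves_node_left {l r : BTree} {a : List Bool} (ha : a ∈ l.leavesF) :
    true :: a ∈ (node l r).leavesF :=
  Finset.mem_union_left _ (Finset.mem_image_of_mem _ ha)

lemma mem_leaves_node_right {l r : BTree} {a : List Bool} (ha : a ∈ r.leavesF) :
    false :: a ∈ (node l r).leavesF :=
  Finset.mem_union_right _ (Finset.mem_image_of_mem _ ha)

lemma mem_splits_node_left {l r : BTree} {s : List Bool} (hs : s ∈ l.splitsF) :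
    true :: s ∈ (node l r).splitsF :=
  Finset.mem_insert_of_mem (Finset.mem_union_left _ (Finset.mem_image_of_mem _ hs))

lemma mem_splits_node_right {l r : BTree} {s : List Bool} (hs : s ∈ r.splitsF) :
    false :: s ∈ (node l r).splitsF :=
  Finset.mem_insert_of_mem (Finset.mem_union_right _ (Finset.mem_image_of_mem _ hs))

lemma feasible_eq (t : BTree) (q : List Bool → Bool) (y : List Bool → ℝ)
    (hy : t.Feasible q y) :
    ∀ ℓ ∈ t.leavesF, y ℓ = if ℓ = t.getLeaf q then 1 else 0 := by
  induction t generalizing q y with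
  | leaf =>
    intro ℓ hℓ
    simp only [leavesF, Finset.mem_singleton] at hℓ
    subst hℓ
    have h1 := hy.1
    simp only [leavesF, Finset.sum_singleton] at h1
    simp [h1, getLeaf, getLeafAux]
  | node l r ihl ihr =>
    obtain ⟨hsum, hnn, hL, hR⟩ := hy
    have hnil : ([] : List Bool) ∈ (node l r).splitsF := Finset.mem_insert_self _ _
    rw [sum_leaves_node] at hsum
    cases hq : q [] with
    | true =>
      -- right side is zero
      have hR0 := hR [] hnil
      rw [rightF_node_nil, Finset.sum_image (fun x _ y _ h => cons_inj false h)] at hR0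
      simp [qval, hq] at hR0
      have hnnr : ∀ ℓ ∈ r.leavesF, 0 ≤ y (false :: ℓ) :=
        fun ℓ hℓ => hnn _ (mem_leaves_node_right hℓ)
      have hsumr : (∑ ℓ ∈ r.leavesF, y (false :: ℓ)) = 0 :=
        le_antisymm (by linarith) (Finset.sum_nonneg hnnr)
      have hzero := (Finset.sum_eq_zero_iff_of_nonneg hnnr).mp hsumr
      have hsuml : (∑ ℓ ∈ l.leavesF, y (true :: ℓ)) = 1 := by linarith
      have hfeas : l.Feasible (fun s => q (true :: s)) (fun ℓ => y (true :: ℓ)) := by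
        refine ⟨hsuml, fun ℓ hℓ => hnn _ (mem_leaves_node_left hℓ), ?_, ?_⟩
        · intro s hs
          have h := hL (true :: s) (mem_splits_node_left hs)
          rwa [leftF_node_cons_true,
            Finset.sum_image (fun x _ y _ h => cons_inj true h)] at h
        · intro s hs
          have h := hR (true :: s) (mem_splits_node_left hs)
          rwa [rightF_node_cons_true,
            Finset.sum_image (fun x _ y _ h => cons_inj true h)] at h
      have ih := ihl _ _ hfeas
      have hg : (node l r).getLeaf q = true :: l.getLeaf (fun s => q (true :: s)) := by
        rw [getLeaf_node, hq, if_pos rfl]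
      intro m hm
      rcases Finset.mem_union.mp hm with hm1 | hm1
      · rcases Finset.mem_image.mp hm1 with ⟨a, ha, rfl⟩
        rw [ih a ha, hg]
        simp
      · rcases Finset.mem_image.mp hm1 with ⟨a, ha, rfl⟩
        rw [hzero a ha, hg]
        simp
    | false =>
      have hL0 := hL [] hnil
      rw [leftF_node_nil, Finset.sum_image (fun x _ y _ h => cons_inj true h)] at hL0
      simp [qval, hq] at hL0
      have hnnl : ∀ ℓ ∈ l.leavesF, 0 ≤ y (true :: ℓ) :=
        fun ℓ hℓ => hnn _ (mem_leaves_node_left hℓ)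
      have hsuml : (∑ ℓ ∈ l.leavesF, y (true :: ℓ)) = 0 :=
        le_antisymm (by linarith) (Finset.sum_nonneg hnnl)
      have hzero := (Finset.sum_eq_zero_iff_of_nonneg hnnl).mp hsuml
      have hsumr : (∑ ℓ ∈ r.leavesF, y (false :: ℓ)) = 1 := by linarith
      have hfeas : r.Feasible (fun s => q (false :: s)) (fun ℓ => y (false :: ℓ)) := by
        refine ⟨hsumr, fun ℓ hℓ => hnn _ (mem_leaves_node_right hℓ), ?_, ?_⟩
        · intro s hs
          have h := hL (false :: s) (mem_splits_node_right hs)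
          rwa [leftF_node_cons_false,
            Finset.sum_image (fun x _ y _ h => cons_inj false h)] at h
        · intro s hs
          have h := hR (false :: s) (mem_splits_node_right hs)
          rwa [rightF_node_cons_false,
            Finset.sum_image (fun x _ y _ h => cons_inj false h)] at h
      have ih := ihr _ _ hfeas
      have hg : (node l r).getLeaf q = false :: r.getLeaf (fun s => q (false :: s)) := by
        rw [getLeaf_node, hq, if_neg (by simp)]
      intro m hm
      rcases Finset.mem_union.mp hm with hm1 | hm1
      · rcases Finset.mem_image.mp hm1 with ⟨a, ha, rfl⟩
        rw [hzero a ha, hg]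
        simp
      · rcases Finset.mem_image.mp hm1 with ⟨a, ha, rfl⟩
        rw [ih a ha, hg]
        simp


end BTree

/-- the prediction `f_t(x) = p_{GetLeaf(x,t)}` of a decision tree equals the
optimal value of the LP: maximize `Σ_ℓ p_ℓ y_ℓ` subject to `y ≥ 0`, `Σ_ℓ y_ℓ = 1` and the
left/right split constraints for every split. -/
theorem tree_prediction_is_LP_value (t : BTree) (q : List Bool → Bool) (p : List Bool → ℝ) :
    IsGreatest {v : ℝ | ∃ y : List Bool → ℝ,
        BTree.Feasible t q y ∧ v = ∑ ℓ ∈ t.leavesF, p ℓ * y ℓ}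
      (p (t.getLeaf q)) := by
  have hgmem := BTree.getLeaf_mem t q
  constructor
  · refine ⟨fun ℓ => if ℓ = t.getLeaf q then 1 else 0, ⟨?_, ?_, ?_, ?_⟩, ?_⟩
    · rw [Finset.sum_ite_eq' t.leavesF (t.getLeaf q) (fun _ => (1 : ℝ))]
      simp [hgmem]
    · intro ℓ _; positivity
    · intro s hs
      rw [Finset.sum_ite_eq' (t.leftF s) (t.getLeaf q) (fun _ => (1 : ℝ))]
      by_cases hmem : t.getLeaf q ∈ t.leftF s
      · have hpre := (Finset.mem_filter.mp hmem).2
        have := BTree.q_eq_of_prefix t q s hs true hpre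
        simp [hmem, BTree.qval, this]
      · simp [hmem, BTree.qval]
        split <;> norm_num
    · intro s hs
      rw [Finset.sum_ite_eq' (t.rightF s) (t.getLeaf q) (fun _ => (1 : ℝ))]
      by_cases hmem : t.getLeaf q ∈ t.rightF s
      · have hpre := (Finset.mem_filter.mp hmem).2
        have := BTree.q_eq_of_prefix t q s hs false hpre
        simp [hmem, BTree.qval, this]
      · simp [hmem, BTree.qval]
        split <;> norm_num
    · rw [Finset.sum_congr rfl (fun ℓ _ => by rw [mul_ite, mul_one, mul_zero]),
        Finset.sum_ite_eq' t.leavesF (t.getLeaf q) p]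
      simp [hgmem]
  · rintro v ⟨y, hy, rfl⟩
    have h := BTree.feasible_eq t q y hy
    have : (∑ ℓ ∈ t.leavesF, p ℓ * y ℓ) = p (t.getLeaf q) := by
      rw [Finset.sum_congr rfl (fun ℓ hℓ => by rw [h ℓ hℓ, mul_ite, mul_one, mul_zero]),
        Finset.sum_ite_eq' t.leavesF (t.getLeaf q) p]
      simp [hgmem]
    exact le_of_eq this
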